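/- Discrete optimization identity: Fix 0 < c_1 ≤ c_2 and N ∈ ℕ, N ≥ 1, and set r = 1 − c_1/c_2. Then the infimum of ∑_{n=0}^{N−1} (c_1 a_n + c_2 (a_{n+1} − a_n))² over all real sequences a_0, …, a_N with a_0 = 0 and a_N = 1 equals c_2² (1 − r²)/(1 − r^{2N}). -/

import Mathlib

/-!
Writing `bₙ = a_{n+1} - r aₙ` with `r = 1 - c₁/c₂`, each summand is `c₂² bₙ²`, and the boundary
conditions become the single linear constraint `∑ r^{N-1-n} bₙ = a_N = 1`. By Cauchy–Schwarz
`∑ bₙ² ≥ 1 / ∑ r^{2(N-1-n)}`, with equality for `bₙ` proportional to `r^{N-1-n}`; summing the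
geometric series gives the closed form.
-/

open Finset

theorem sum_range_pow_mul_sub_mul_eq {R : Type*} [CommRing R] (r : R) (a : ℕ → R) (ha : a 0 = 0)
    (M : ℕ) : ∑ n ∈ range M, r ^ (M - 1 - n) * (a (n + 1) - r * a n) = a M := by
  induction M with
  | zero => simpa using ha.symm
  | succ M ih =>
    have hshift : ∀ n ∈ range M, r ^ (M + 1 - 1 - n) * (a (n + 1) - r * a n)
        = r * (r ^ (M - 1 - n) * (a (n + 1) - r * a n)) := by
      intro n hn
      rw [← mul_assoc, ← pow_succ', show M - 1 - n + 1 = M + 1 - 1 - n by grind]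
    rw [sum_range_succ, sum_congr rfl hshift, ← mul_sum, ih]
    simp

theorem sum_range_sq_pow_sub_one_sub {R : Type*} [CommSemiring R] (r : R) (N : ℕ) :
    ∑ n ∈ range N, (r ^ (N - 1 - n)) ^ 2 = ∑ k ∈ range N, (r ^ 2) ^ k := by
  rw [← sum_range_reflect (fun k => (r ^ 2) ^ k)]
  exact sum_congr rfl fun n _ => by rw [← pow_mul, ← pow_mul, mul_comm]

theorem exists_sub_mul_eq {R : Type*} [Ring R] (r : R) (b : ℕ → R) :
    ∃ a : ℕ → R, a 0 = 0 ∧ ∀ n, a (n + 1) - r * a n = b n :=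
  ⟨fun n => Nat.rec 0 (fun n an => r * an + b n) n, rfl, fun n => by simp⟩

theorem isLeast_sum_sq_mul_sub_mul (c r : ℝ) {N : ℕ} (hN : 1 ≤ N) :
    IsLeast {S : ℝ | ∃ a : ℕ → ℝ, a 0 = 0 ∧ a N = 1 ∧
        S = ∑ n ∈ range N, (c * (a (n + 1) - r * a n)) ^ 2}
      (c ^ 2 / ∑ k ∈ range N, (r ^ 2) ^ k) := by
  set W := ∑ k ∈ range N, (r ^ 2) ^ k with hW
  have hWpos : 0 < W := geom_sum_pos (sq_nonneg r) (by omega)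
  have hsum_sq : ∀ a : ℕ → ℝ, ∑ n ∈ range N, (c * (a (n + 1) - r * a n)) ^ 2
      = c ^ 2 * ∑ n ∈ range N, (a (n + 1) - r * a n) ^ 2 := by
    intro a
    simp_rw [mul_pow, mul_sum]
  constructor
  · -- equality case of Cauchy–Schwarz
    obtain ⟨a, ha0, hb⟩ := exists_sub_mul_eq r fun n => r ^ (N - 1 - n) / W
    refine ⟨a, ha0, ?_, ?_⟩
    · rw [← sum_range_pow_mul_sub_mul_eq r a ha0 N]
      simp_rw [hb, mul_div_assoc', ← sq, ← sum_div, sum_range_sq_pow_sub_one_sub, ← hW,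
        div_self hWpos.ne']
    · simp_rw [hsum_sq, hb, div_pow, ← sum_div, sum_range_sq_pow_sub_one_sub, ← hW]
      field_simp
  · rintro S ⟨a, ha0, haN, rfl⟩
    have hCS := sum_mul_sq_le_sq_mul_sq (range N) (fun n => r ^ (N - 1 - n))
      fun n => a (n + 1) - r * a n
    rw [sum_range_pow_mul_sub_mul_eq r a ha0, haN, sum_range_sq_pow_sub_one_sub, ← hW,
      one_pow] at hCS
    rw [hsum_sq, div_le_iff₀ hWpos]
    nlinarith [sq_nonneg c]

/-- Discrete LQR identity: for `0 < c₁ ≤ c₂`, `N ≥ 1`, and `r = 1 − c₁/c₂`, the infimum of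
`∑_{n=0}^{N−1} (c₁ aₙ + c₂ (a_{n+1} − aₙ))²` over sequences with `a₀ = 0`, `a_N = 1`
equals `c₂² (1 − r²)/(1 − r^{2N})`. -/
theorem discrete_lqr_identity (c₁ c₂ : ℝ) (h₁ : 0 < c₁) (h₁₂ : c₁ ≤ c₂) (N : ℕ) (hN : 1 ≤ N) :
    sInf {S : ℝ | ∃ a : ℕ → ℝ, a 0 = 0 ∧ a N = 1 ∧
        S = ∑ n ∈ Finset.range N, (c₁ * a n + c₂ * (a (n + 1) - a n)) ^ 2}
      = c₂ ^ 2 * (1 - (1 - c₁ / c₂) ^ 2) / (1 - (1 - c₁ / c₂) ^ (2 * N)) := by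
  have hc₂ : 0 < c₂ := h₁.trans_le h₁₂
  set r := 1 - c₁ / c₂
  have hsummand : ∀ (a : ℕ → ℝ) (n : ℕ),
      c₁ * a n + c₂ * (a (n + 1) - a n) = c₂ * (a (n + 1) - r * a n) := by
    intro a n
    simp only [r]
    field_simp
    ring
  have hr2 : r ^ 2 < 1 := by
    have : 0 < c₁ / c₂ := div_pos h₁ hc₂
    have : c₁ / c₂ ≤ 1 := (div_le_one hc₂).mpr h₁₂
    nlinarith
  simp_rw [hsummand, (isLeast_sum_sq_mul_sub_mul c₂ r hN).csInf_eq, geom_sum_eq hr2.ne, pow_mul]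
  rw [div_div_eq_mul_div, ← neg_sub 1 (r ^ 2), ← neg_sub 1 ((r ^ 2) ^ N), mul_neg,
    neg_div_neg_eq]
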